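/- arXiv:0705.3233 — 12 statements merged into one kernel-verified Lean document; each statement's English description precedes it below -/
import Mathlib

section
/- Let r be a positive integer relatively prime to 3. Then r divides (3^(ord_r(3)) - 1)/2 if and only if ord_r(3) = ord_{2r}(3), where ord_m(3) denotes the multiplicative order of 3 modulo m. -/
/-! Reduction `ZMod (2 * r) → ZMod r` gives `ord_r(3) ∣ ord_{2r}(3)`, so the orders agree iff
`3 ^ ord_r(3) ≡ 1 [MOD 2 * r]`; as `3 ^ ord_r(3) - 1` is even, this says `r ∣ (3 ^ ord_r(3) - 1) / 2`. -/

theorem orderOf_map_eq_iff_pow_eq_one {G H : Type*} [Monoid G] [Monoid H] (f : G →* H) (x : G) :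
    orderOf (f x) = orderOf x ↔ x ^ orderOf (f x) = 1 :=
  ⟨fun h => h ▸ pow_orderOf_eq_one x,
    fun h => dvd_antisymm (orderOf_map_dvd f x) (orderOf_dvd_of_pow_eq_one h)⟩

theorem ZMod.natCast_pow_eq_one_iff_dvd {a : ℕ} (ha : 0 < a) (n k : ℕ) :
    (a : ZMod n) ^ k = 1 ↔ n ∣ a ^ k - 1 := by
  rw [← Nat.cast_pow, ← Nat.cast_one, ZMod.natCast_eq_natCast_iff, Nat.ModEq.comm,
    Nat.modEq_iff_dvd' (Nat.one_le_pow k a ha)]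

theorem Nat.two_dvd_pow_sub_one_of_odd {a : ℕ} (ha : Odd a) (k : ℕ) : 2 ∣ a ^ k - 1 :=
  ((ha.pow (n := k)).tsub_odd odd_one).two_dvd

theorem stmt1_general (r : ℕ) :
    r ∣ (3 ^ orderOf (3 : ZMod r) - 1) / 2 ↔
      orderOf (3 : ZMod r) = orderOf (3 : ZMod (2 * r)) := by
  have hcast : (ZMod.castHom (dvd_mul_left r 2) (ZMod r)).toMonoidHom 3 = 3 :=
    map_ofNat (ZMod.castHom (dvd_mul_left r 2) (ZMod r)) 3
  rw [Nat.dvd_div_iff_mul_dvd (Nat.two_dvd_pow_sub_one_of_odd (by decide) _), ← hcast,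
    orderOf_map_eq_iff_pow_eq_one, hcast, ← Nat.cast_ofNat (R := ZMod (2 * r)) (n := 3),
    ZMod.natCast_pow_eq_one_iff_dvd (by norm_num)]

theorem stmt1 (r : ℕ) (hr : 0 < r) (h : Nat.Coprime r 3) :
    r ∣ (3 ^ orderOf (3 : ZMod r) - 1) / 2 ↔
      orderOf (3 : ZMod r) = orderOf (3 : ZMod (2 * r)) :=
  stmt1_general r
end

section
/- Let r = 2^ℓ · k where ℓ ≥ 3 and gcd(k,6) = 1. Then r is distinguished with respect to (3,1) (i.e., ord_r(3) = ord_{2r}(3)) if and only if 2^(ℓ-1) divides ord_k(3). -/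
-- 3^(2^m) = 1 + 2^(m+2) * c with c odd, for m ≥ 1
lemma key3 : ∀ m, 1 ≤ m → ∃ c, Odd c ∧ 3 ^ 2 ^ m = 1 + 2 ^ (m + 2) * c := by
  intro m hm
  induction m with
  | zero => omega
  | succ n ih =>
    rcases Nat.eq_or_lt_of_le hm with h | h
    · exact ⟨1, odd_one, by rw [← h]; norm_num⟩
    · obtain ⟨c, hc, hE⟩ := ih (by omega)
      refine ⟨c + 2 ^ (n + 1) * c ^ 2, ?_, ?_⟩
      · rcases hc with ⟨t, ht⟩
        exact ⟨t + 2 ^ n * c ^ 2, by subst ht; ring⟩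
      · have : 3 ^ 2 ^ (n + 1) = (3 ^ 2 ^ n) ^ 2 := by
          rw [← pow_mul, pow_succ]
        rw [this, hE]; ring

lemma ord_two_pow (e : ℕ) (he : 3 ≤ e) :
    orderOf (3 : ZMod (2 ^ e)) = 2 ^ (e - 2) := by
  haveI : NeZero (2 ^ e) := ⟨by positivity⟩
  obtain ⟨c, hc, hE⟩ := key3 (e - 2) (by omega)
  have hpow : (3 : ZMod (2 ^ e)) ^ 2 ^ (e - 2) = 1 := by
    have : ((3 ^ 2 ^ (e - 2) : ℕ) : ZMod (2 ^ e)) = ((1 + 2 ^ (e - 2 + 2) * c : ℕ) : ZMod (2 ^ e)) := by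
      rw [hE]
    have he2 : e - 2 + 2 = e := by omega
    rw [he2] at this
    have hz : ((2 : ZMod (2 ^ e))) ^ e = 0 := by
      have h2 := ZMod.natCast_self (2 ^ e)
      push_cast at h2
      exact h2
    push_cast at this
    rw [hz] at this
    simpa using this
  have hdvd : orderOf (3 : ZMod (2 ^ e)) ∣ 2 ^ (e - 2) :=
    orderOf_dvd_of_pow_eq_one hpow
  obtain ⟨j, hj, hjo⟩ := (Nat.dvd_prime_pow Nat.prime_two).mp hdvd
  rcases Nat.eq_or_lt_of_le hj with h | h
  · rw [hjo, h]
  · exfalso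
    have hdvd2 : orderOf (3 : ZMod (2 ^ e)) ∣ 2 ^ (e - 3) := by
      rw [hjo]; exact pow_dvd_pow 2 (by omega)
    have hpow2 : (3 : ZMod (2 ^ e)) ^ 2 ^ (e - 3) = 1 :=
      orderOf_dvd_iff_pow_eq_one.mp hdvd2
    rcases Nat.eq_or_lt_of_le he with h3 | h3
    · -- e = 3
      rw [← h3] at hpow2
      norm_num at hpow2
      revert hpow2; decide
    · -- e ≥ 4
      obtain ⟨d, hd, hD⟩ := key3 (e - 3) (by omega)
      have he3 : e - 3 + 2 = e - 1 := by omega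
      rw [he3] at hD
      have : ((3 ^ 2 ^ (e - 3) : ℕ) : ZMod (2 ^ e)) = 1 := by
        push_cast
        rw [hpow2]
      rw [hD] at this
      push_cast at this
      have h0 : ((2 ^ (e - 1) * d : ℕ) : ZMod (2 ^ e)) = 0 := by
        push_cast
        linear_combination this
      rw [ZMod.natCast_eq_zero_iff] at h0
      have : 2 ^ e ∣ 2 ^ (e - 1) * d := h0
      have h2d : 2 ∣ d := by
        have heq : 2 ^ e = 2 ^ (e - 1) * 2 := by
          rw [← pow_succ]; congr 1; omega
        rw [heq] at this
        exact (mul_dvd_mul_iff_left (a := (2:ℕ) ^ (e-1)) (by positivity)).mp this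
      rcases hd with ⟨t, ht⟩
      omega

lemma ord_crt (m n a : ℕ) (h : Nat.Coprime m n) :
    orderOf ((a : ZMod (m * n))) =
      Nat.lcm (orderOf ((a : ZMod m))) (orderOf ((a : ZMod n))) := by
  let e := ZMod.chineseRemainder h
  have h1 : orderOf ((a : ZMod (m * n))) = orderOf (e ((a : ZMod (m * n)))) :=
    (orderOf_injective e.toRingHom.toMonoidHom e.injective _).symm
  have h2 : e ((a : ZMod (m * n))) = ((a : ZMod m), (a : ZMod n)) := by
    have h3 : e ((a : ZMod (m * n))) = ((a : ℕ) : ZMod m × ZMod n) := by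
      have := map_natCast e.toRingHom a
      simpa using this
    rw [h3]
    exact Prod.ext (by simp) (by simp)
  rw [h1, h2, Prod.orderOf_mk]

lemma lcm_iff (ℓ d : ℕ) (hℓ : 3 ≤ ℓ) (hd : 0 < d) :
    Nat.lcm (2 ^ (ℓ - 2)) d = Nat.lcm (2 ^ (ℓ - 1)) d ↔ 2 ^ (ℓ - 1) ∣ d := by
  constructor
  · intro h
    have h1 : 2 ^ (ℓ - 1) ∣ Nat.lcm (2 ^ (ℓ - 2)) d := h ▸ Nat.dvd_lcm_left _ _
    have hL : Nat.lcm (2 ^ (ℓ - 2)) d ≠ 0 := Nat.lcm_ne_zero (by positivity) hd.ne'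
    have hf := Nat.factorization_lcm (a := 2 ^ (ℓ - 2)) (b := d) (by positivity) hd.ne'
    have h2 : (ℓ - 1) ≤ (Nat.lcm (2 ^ (ℓ - 2)) d).factorization 2 :=
      (Nat.Prime.pow_dvd_iff_le_factorization Nat.prime_two hL).mp h1
    rw [hf] at h2
    have h3 : (ℓ - 1) ≤ max ((2 ^ (ℓ - 2)).factorization 2) (d.factorization 2) := by
      simpa [Finsupp.sup_apply] using h2
    rw [Nat.Prime.factorization_pow Nat.prime_two] at h3
    simp [Finsupp.single_eq_same] at h3
    exact (Nat.Prime.pow_dvd_iff_le_factorization Nat.prime_two hd.ne').mpr (by omega)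
  · intro h
    have key : ∀ x, x ∣ d → Nat.lcm x d = d := fun x hx =>
      Nat.dvd_antisymm (Nat.lcm_dvd hx dvd_rfl) (Nat.dvd_lcm_right _ _)
    rw [key _ (dvd_trans (pow_dvd_pow 2 (by omega)) h), key _ h]

theorem stmt4 (ℓ k r : ℕ) (hℓ : 3 ≤ ℓ) (hk : Nat.Coprime k 6)
    (hr : r = 2 ^ ℓ * k) :
    orderOf (3 : ZMod r) = orderOf (3 : ZMod (2 * r)) ↔
      2 ^ (ℓ - 1) ∣ orderOf (3 : ZMod k) := by
  subst hr
  have hk0 : k ≠ 0 := by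
    rintro rfl
    simp [Nat.Coprime] at hk
  haveI : NeZero k := ⟨hk0⟩
  have h2k : Nat.Coprime 2 k := (hk.coprime_dvd_right (by norm_num)).symm
  have h3k : Nat.Coprime 3 k := (hk.coprime_dvd_right (by norm_num)).symm
  have cast3 : ∀ n : ℕ, (3 : ZMod n) = ((3 : ℕ) : ZMod n) := fun n => by norm_cast
  set d := orderOf (3 : ZMod k) with hd
  have hdpos : 0 < d := by
    have hu := orderOf_units (G := ZMod k) (y := ZMod.unitOfCoprime 3 h3k)
    have hcoe : ((ZMod.unitOfCoprime 3 h3k : (ZMod k)ˣ) : ZMod k) = (3 : ZMod k) := by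
      rw [ZMod.coe_unitOfCoprime, cast3]
    rw [hcoe] at hu
    rw [hd, hu]
    exact orderOf_pos _
  have hmul : 2 * (2 ^ ℓ * k) = 2 ^ (ℓ + 1) * k := by ring
  have e1 : orderOf (3 : ZMod (2 ^ ℓ * k)) = Nat.lcm (2 ^ (ℓ - 2)) d := by
    rw [cast3, ord_crt _ _ _ (Nat.Coprime.pow_left _ h2k), ← cast3, ← cast3,
      ord_two_pow ℓ hℓ]
  have e2 : orderOf (3 : ZMod (2 * (2 ^ ℓ * k))) = Nat.lcm (2 ^ (ℓ - 1)) d := by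
    rw [hmul, cast3, ord_crt _ _ _ (Nat.Coprime.pow_left _ h2k), ← cast3, ← cast3,
      ord_two_pow (ℓ + 1) (by omega)]
    have hx : ℓ + 1 - 2 = ℓ - 1 := by omega
    rw [hx]
  rw [e1, e2]
  exact lcm_iff ℓ d hℓ hdpos
end

section
/- Let r = 2k where gcd(k,6) = 1. Then r is distinguished with respect to (3,1) if and only if ord_k(3) is even. -/
theorem stmt5 (k r : ℕ) (hk : Nat.Coprime k 6) (hr : r = 2 * k) :
    r ∣ (3 ^ orderOf (3 : ZMod r) - 1) / 2 ↔
      Even (orderOf (3 : ZMod k)) := by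
  have hk2 : Nat.Coprime k 2 := hk.coprime_dvd_right (by norm_num)
  have hk0 : k ≠ 0 := by rintro rfl; simp [Nat.Coprime] at hk
  have hr0 : r ≠ 0 := by simp [hr, hk0]
  haveI : NeZero k := ⟨hk0⟩
  haveI : NeZero r := ⟨hr0⟩
  set d := orderOf (3 : ZMod k) with hd
  have h3d : (3 : ZMod k) ^ d = 1 := pow_orderOf_eq_one _
  have hpow1 : 1 ≤ 3 ^ d := Nat.one_le_pow _ _ (by norm_num)
  have hkdvd : k ∣ 3 ^ d - 1 := by
    have h1 : ((3 ^ d : ℕ) : ZMod k) = ((1 : ℕ) : ZMod k) := by push_cast; simpa using h3d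
    have h2 := (ZMod.natCast_eq_natCast_iff _ _ _).1 h1
    exact (Nat.modEq_iff_dvd' hpow1).1 h2.symm
  have h2dvd : 2 ∣ 3 ^ d - 1 := by
    have h := Nat.pow_mod 3 d 2
    simp at h
    omega
  have hrdvd : r ∣ 3 ^ d - 1 := by
    rw [hr]
    exact Nat.Coprime.mul_dvd_of_dvd_of_dvd hk2.symm h2dvd hkdvd
  have horder : orderOf (3 : ZMod r) = d := by
    apply Nat.dvd_antisymm
    · apply orderOf_dvd_of_pow_eq_one
      have h0 : ((3 ^ d - 1 : ℕ) : ZMod r) = 0 :=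
        (ZMod.natCast_eq_zero_iff _ _).2 hrdvd
      rw [Nat.cast_sub hpow1] at h0
      push_cast at h0
      exact sub_eq_zero.1 h0
    · apply orderOf_dvd_of_pow_eq_one
      have hkr : k ∣ r := ⟨2, by omega⟩
      have h := congrArg (ZMod.castHom hkr (ZMod k)) (pow_orderOf_eq_one (3 : ZMod r))
      rw [map_pow, map_ofNat, map_one] at h
      exact h
  rw [horder]
  have hdiv : r ∣ (3 ^ d - 1) / 2 ↔ 2 * r ∣ 3 ^ d - 1 := Nat.dvd_div_iff_mul_dvd h2dvd
  rw [hdiv]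
  have h4 : 4 ∣ 3 ^ d - 1 ↔ Even d := by
    rw [← Nat.modEq_iff_dvd' hpow1, Nat.ModEq.comm, ← ZMod.natCast_eq_natCast_iff]
    push_cast
    haveI : Fact (Nat.Prime 2) := ⟨by norm_num⟩
    have ho : orderOf (3 : ZMod 4) = 2 :=
      orderOf_eq_prime (by decide) (by decide)
    rw [← orderOf_dvd_iff_pow_eq_one, ho]
    exact even_iff_two_dvd.symm
  have hk4 : Nat.Coprime k 4 := by
    have := hk2.pow_right 2
    simpa using this
  constructor
  · intro h
    exact h4.1 (dvd_trans ⟨k, by rw [hr]; ring⟩ h)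
  · intro h
    have h4k : 4 * k ∣ 3 ^ d - 1 :=
      Nat.Coprime.mul_dvd_of_dvd_of_dvd hk4.symm (h4.2 h) hkdvd
    exact (show 2 * r = 4 * k by rw [hr]; ring) ▸ h4k
end

section
/- Every positive integer of the form r = 4k with gcd(k,6) = 1 is distinguished with respect to (3,1). -/
/-!
Write `n` for the order of `3` modulo `4k`, so `4k ∣ 3ⁿ - 1`. Since `3ⁿ ≡ 1 (mod 4)`, `n` is
even, and then `3ⁿ - 1` is divisible by `3² - 1 = 8`. As `k` is odd, `8k ∣ 3ⁿ - 1`, that is,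
`4k ∣ (3ⁿ - 1) / 2`.
-/

theorem Nat.dvd_pow_orderOf_sub_one (a r : ℕ) : r ∣ a ^ orderOf (a : ZMod r) - 1 := by
  have h : ((a ^ orderOf (a : ZMod r) : ℕ) : ZMod r) = ((1 : ℕ) : ZMod r) := by
    push_cast
    exact pow_orderOf_eq_one _
  exact Nat.dvd_of_mod_eq_zero <|
    Nat.sub_mod_eq_zero_of_mod_eq ((ZMod.natCast_eq_natCast_iff _ _ _).mp h)

theorem Nat.even_of_four_dvd_pow_sub_one {a n : ℕ} (ha : a % 4 = 3) (h : 4 ∣ a ^ n - 1) :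
    Even n := by
  by_contra hn
  obtain ⟨m, rfl⟩ := Nat.not_even_iff_odd.mp hn
  have : a ^ (2 * m + 1) % 4 = 3 := by
    rw [Nat.pow_mod, ha, pow_succ, pow_mul, Nat.mul_mod, Nat.pow_mod]
    norm_num
  omega

theorem Nat.eight_dvd_pow_sub_one_of_even {a n : ℕ} (ha : Odd a) (hn : Even n) :
    8 ∣ a ^ n - 1 :=
  (Nat.eight_dvd_sq_sub_one_of_odd ha).trans (Nat.pow_sub_one_dvd_pow_sub_one a hn.two_dvd)

theorem stmt6_general (k r : ℕ) (hk : Nat.Coprime k 6)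
    (hr : r = 4 * k) :
    r ∣ (3 ^ orderOf (3 : ZMod r) - 1) / 2 := by
  subst hr
  have hdvd : 4 * k ∣ 3 ^ orderOf (3 : ZMod (4 * k)) - 1 := by
    simpa using Nat.dvd_pow_orderOf_sub_one 3 (4 * k)
  have h8 : 8 ∣ 3 ^ orderOf (3 : ZMod (4 * k)) - 1 :=
    Nat.eight_dvd_pow_sub_one_of_even (by decide)
      (Nat.even_of_four_dvd_pow_sub_one rfl ((Dvd.intro k rfl).trans hdvd))
  have hcop : Nat.Coprime 8 k :=
    ((Nat.Coprime.coprime_dvd_right (by norm_num : 2 ∣ 6) hk).pow_right 3).symm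
  apply Nat.dvd_div_of_mul_dvd
  rw [← mul_assoc]
  exact hcop.mul_dvd_of_dvd_of_dvd h8 ((Dvd.intro_left 4 rfl).trans hdvd)

theorem stmt6 (k r : ℕ) (hk : Nat.Coprime k 6) (hkpos : 0 < k)
    (hr : r = 4 * k) :
    r ∣ (3 ^ orderOf (3 : ZMod r) - 1) / 2 :=
  stmt6_general k r hk hr
end

section
/- If r is distinguished with respect to (3,1), then every positive integer congruent to r modulo 6r or to 5r modulo 6r is also distinguished with respect to (3,1). -/
theorem stmt7 (r : ℕ) (hr : 2 ≤ r) (hcop : Nat.Coprime r 3)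
    (hdist : r ∣ (3 ^ orderOf (3 : ZMod r) - 1) / 2)
    (r' : ℕ) (hr' : 0 < r')
    (hcong : r' ≡ r [MOD 6 * r] ∨ r' ≡ 5 * r [MOD 6 * r]) :
    r' ∣ (3 ^ orderOf (3 : ZMod r') - 1) / 2 := by
  have hrpos : 0 < r := by omega
  -- extract the odd multiplier m with r' = r * m
  obtain ⟨m, hm, hmodd⟩ : ∃ m, r' = r * m ∧ m % 2 = 1 := by
    rcases hcong with h | h
    · have h1 : r' % (6 * r) = r % (6 * r) := h
      have h2 : r % (6 * r) = r := Nat.mod_eq_of_lt (by omega)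
      have h3 := Nat.div_add_mod r' (6 * r)
      obtain ⟨q, hq⟩ : ∃ q, r' = 6 * r * q + r := ⟨r' / (6 * r), by omega⟩
      exact ⟨6 * q + 1, by rw [hq]; ring, by omega⟩
    · have h1 : r' % (6 * r) = (5 * r) % (6 * r) := h
      have h2 : (5 * r) % (6 * r) = 5 * r := Nat.mod_eq_of_lt (by omega)
      have h3 := Nat.div_add_mod r' (6 * r)
      obtain ⟨q, hq⟩ : ∃ q, r' = 6 * r * q + 5 * r := ⟨r' / (6 * r), by omega⟩
      exact ⟨6 * q + 5, by rw [hq]; ring, by omega⟩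
  set d := orderOf (3 : ZMod r) with hd
  set d' := orderOf (3 : ZMod r') with hd'
  have hrr' : r ∣ r' := ⟨m, hm⟩
  -- d ∣ d'
  have hdd' : d ∣ d' := by
    have hmap : (ZMod.castHom hrr' (ZMod r)) (3 : ZMod r') = (3 : ZMod r) :=
      map_ofNat _ 3
    have := orderOf_map_dvd (ZMod.castHom hrr' (ZMod r)).toMonoidHom (3 : ZMod r')
    simpa [hmap] using this
  -- 2 ∣ 3^d - 1
  have h2d : 2 ∣ 3 ^ d - 1 := by
    have h1 : 3 ^ d % 2 = 1 := by
      rw [Nat.pow_mod]; simp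
    have h2 : 1 ≤ 3 ^ d := Nat.one_le_pow _ _ (by norm_num)
    omega
  -- 2r ∣ 3^d - 1
  have hA : 2 * r ∣ 3 ^ d - 1 := by
    have := mul_dvd_mul_left 2 hdist
    rwa [Nat.mul_div_cancel' h2d] at this
  -- 3^d - 1 ∣ 3^d' - 1
  have hB : 3 ^ d - 1 ∣ 3 ^ d' - 1 := by
    obtain ⟨k, hk⟩ := hdd'
    rw [hk, pow_mul]
    simpa using Nat.sub_dvd_pow_sub_pow (3 ^ d) 1 k
  -- r' ∣ 3^d' - 1
  have hC : r' ∣ 3 ^ d' - 1 := by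
    have h1 : ((3 ^ d' : ℕ) : ZMod r') = ((1 : ℕ) : ZMod r') := by
      push_cast
      exact pow_orderOf_eq_one _
    have h2 : 3 ^ d' ≡ 1 [MOD r'] := (ZMod.natCast_eq_natCast_iff _ _ _).mp h1
    exact (Nat.modEq_iff_dvd' (Nat.one_le_pow _ _ (by norm_num))).mp h2.symm
  -- combine
  obtain ⟨k, hk⟩ : 2 * r ∣ 3 ^ d' - 1 := hA.trans hB
  obtain ⟨t, ht⟩ := hC
  have h2k : 2 * k = m * t := by
    have e1 : r * (2 * k) = r * (m * t) := by
      rw [hm] at ht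
      calc r * (2 * k) = 2 * r * k := by ring
        _ = r * m * t := by rw [← hk, ht]
        _ = r * (m * t) := by ring
    exact Nat.eq_of_mul_eq_mul_left hrpos e1
  have hm2 : Nat.Coprime m 2 :=
    ((Nat.prime_two.coprime_iff_not_dvd).mpr (by omega)).symm
  have hmk : m ∣ k := by
    have : m ∣ 2 * k := ⟨t, h2k⟩
    exact (Nat.Coprime.dvd_of_dvd_mul_left hm2 this)
  obtain ⟨k', hk'⟩ := hmk
  have hN : 3 ^ d' - 1 = 2 * (r' * k') := by
    rw [hk, hk', hm]; ring
  rw [hN, Nat.mul_div_cancel_left _ (by norm_num)]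
  exact Dvd.intro k' rfl
end

section
/- For every nonnegative integer k, the residue 2 + 4k is not a quadratic residue modulo 5 + 12k; equivalently the Jacobi symbol (2+4k | 5+12k) equals -1. -/
/-!
Since `3 * (2 + 4k) = 1 + (5 + 12k)`, the residue `2 + 4k` is the inverse of `3` modulo
`n = 5 + 12k`, so the two have the same Jacobi symbol. As `n ≡ 1 (mod 4)`, quadratic reciprocity
gives `(3 | n) = (n | 3) = (2 | 3) = -1`. A residue with Jacobi symbol `-1` is not a square.
-/

theorem jacobiSym_eq_of_mul_modEq_one {a b : ℤ} {n : ℕ} (h : a * b ≡ 1 [ZMOD n]) :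
    jacobiSym b n = jacobiSym a n := by
  have hprod : jacobiSym a n * jacobiSym b n = 1 := by
    rw [← jacobiSym.mul_left, jacobiSym.mod_left' h, jacobiSym.one_left]
  rcases Int.eq_one_or_neg_one_of_mul_eq_one' hprod with ⟨ha, hb⟩ | ⟨ha, hb⟩ <;> rw [ha, hb]

theorem jacobiSym_three_of_mod_twelve_eq_five {n : ℕ} (hn : n % 12 = 5) :
    jacobiSym 3 n = -1 := by
  have hrec : jacobiSym 3 n = jacobiSym n 3 :=
    jacobiSym.quadratic_reciprocity_one_mod_four' (a := 3) (by decide) (by omega)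
  have hmod : (n : ℤ) % 3 = 2 := by omega
  rw [hrec, jacobiSym.mod_left, Nat.cast_ofNat, hmod, jacobiSym.at_two (by decide)]
  decide

theorem stmt8 (k : ℕ) :
    (¬ ∃ x : ZMod (5 + 12 * k), x ^ 2 = (2 + 4 * k : ℕ)) ∧
      jacobiSym (2 + 4 * (k : ℤ)) (5 + 12 * k) = -1 := by
  have hinv : 3 * (2 + 4 * (k : ℤ)) ≡ 1 [ZMOD (5 + 12 * k : ℕ)] :=
    Int.modEq_iff_dvd.mpr ⟨-1, by push_cast; ring⟩
  have hj : jacobiSym (2 + 4 * (k : ℤ)) (5 + 12 * k) = -1 := by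
    rw [jacobiSym_eq_of_mul_modEq_one hinv, jacobiSym_three_of_mod_twelve_eq_five (by omega)]
  refine ⟨fun ⟨x, hx⟩ => ZMod.nonsquare_of_jacobiSym_eq_neg_one hj ⟨x, ?_⟩, hj⟩
  push_cast at hx ⊢
  rw [← hx, sq]
end

section
/- Every positive integer r ≡ 10 (mod 24) is distinguished with respect to (3,1), i.e., r divides (3^(ord_r(3)) - 1)/2. -/
theorem stmt9 (r : ℕ) (hr : 0 < r) (h : r % 24 = 10) :
    r ∣ (3 ^ orderOf (3 : ZMod r) - 1) / 2 := by
  obtain ⟨m, hm⟩ : 2 ∣ r := by omega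
  have hm12 : m % 12 = 5 := by omega
  have hmodd : Odd m := Nat.odd_iff.mpr (by omega)
  have hpow : (3 : ZMod r) ^ orderOf (3 : ZMod r) = 1 := pow_orderOf_eq_one _
  set n := orderOf (3 : ZMod r) with hn
  have h31 : (1:ℕ) ≤ 3 ^ n := Nat.one_le_pow _ _ (by norm_num)
  -- r divides 3^n - 1
  have hrdvd : r ∣ 3 ^ n - 1 := by
    have : ((3 ^ n - 1 : ℕ) : ZMod r) = 0 := by
      rw [Nat.cast_sub h31]
      push_cast
      rw [hpow]
      ring
    exact (ZMod.natCast_eq_zero_iff _ _).mp this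
  -- n is even
  have hneven : Even n := by
    by_contra hodd
    rw [Nat.not_even_iff_odd] at hodd
    have hsq : IsSquare (3 : ZMod r) := by
      refine ⟨3 ^ ((n + 1) / 2), ?_⟩
      have h1 : (3 : ZMod r) ^ ((n + 1) / 2) * 3 ^ ((n + 1) / 2) = 3 ^ (n + 1) := by
        rw [← pow_add]
        congr 1
        obtain ⟨j, hj⟩ := hodd
        omega
      rw [h1, pow_succ, hpow, one_mul]
    have hmr : m ∣ r := ⟨2, by omega⟩
    have hsqm : IsSquare ((3 : ℤ) : ZMod m) := by
      obtain ⟨c, hc⟩ := hsq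
      refine ⟨ZMod.castHom hmr (ZMod m) c, ?_⟩
      have h2 := congrArg (ZMod.castHom hmr (ZMod m)) hc
      rw [map_mul] at h2
      rw [← h2]
      push_cast
      exact (map_ofNat (ZMod.castHom hmr (ZMod m)) 3).symm
    have hj : jacobiSym 3 m = -1 := by
      rw [jacobiSym.mod_right 3 hmodd]
      norm_num [hm12]
    exact ZMod.nonsquare_of_jacobiSym_eq_neg_one hj hsqm
  -- 8 divides 3^n - 1
  obtain ⟨k, hk⟩ := hneven
  have h8 : (8:ℕ) ∣ 3 ^ n - 1 := by
    have h9k : 3 ^ n = 9 ^ k := by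
      rw [hk, ← two_mul, pow_mul]
      norm_num
    rw [h9k]
    have h9 : (9:ℕ) ^ k % 8 = 1 := by
      rw [Nat.pow_mod]
      norm_num
    omega
  -- combine: 2r ∣ 3^n - 1
  have h2r : 2 * r ∣ 3 ^ n - 1 := by
    have hmd : m ∣ 3 ^ n - 1 := dvd_trans ⟨2, by omega⟩ hrdvd
    have h4 : (4:ℕ) ∣ 3 ^ n - 1 := dvd_trans (by norm_num) h8
    have hcop : Nat.Coprime 4 m := by
      have h2m : Nat.Coprime 2 m :=
        (Nat.prime_two.coprime_iff_not_dvd).mpr (by omega)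
      have : Nat.Coprime (2 ^ 2) m := Nat.Coprime.pow_left 2 h2m
      simpa using this
    have h4m : 4 * m ∣ 3 ^ n - 1 := Nat.Coprime.mul_dvd_of_dvd_of_dvd hcop h4 hmd
    have : 2 * r = 4 * m := by omega
    rw [this]
    exact h4m
  have h2 : (2:ℕ) ∣ 3 ^ n - 1 := dvd_trans ⟨r, rfl⟩ h2r
  exact (Nat.dvd_div_iff_mul_dvd h2).mpr h2r
end

section
/- For every nonnegative integer k, the multiplicative order of 3 modulo 5 + 12k is even. -/
/-! An element of odd order `n` is the square of its `(n + 1) / 2`-th power, so it suffices that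
`3` is not a square modulo `m = 5 + 12k`; this follows from the Jacobi symbol `J(3 | m) = -1`. -/

theorem IsSquare.of_odd_orderOf {M : Type*} [Monoid M] {a : M} (h : Odd (orderOf a)) :
    IsSquare a := by
  obtain ⟨j, hj⟩ := h
  refine ⟨a ^ (j + 1), ?_⟩
  rw [← pow_add, show j + 1 + (j + 1) = orderOf a + 1 by omega, pow_succ, pow_orderOf_eq_one,
    one_mul]

theorem even_orderOf_of_not_isSquare {M : Type*} [Monoid M] {a : M} (h : ¬IsSquare a) :
    Even (orderOf a) :=
  Nat.not_odd_iff_even.mp fun hodd => h (.of_odd_orderOf hodd)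

-- By quadratic reciprocity `J(3 | m)` depends only on `m` mod `12`.
theorem jacobiSym_three_of_mod_twelve_eq_five_s10 {m : ℕ} (hm : m % 12 = 5) : jacobiSym 3 m = -1 := by
  rw [jacobiSym.mod_right 3 (Nat.odd_iff.mpr (by omega))]
  norm_num [hm]

theorem stmt10 (k : ℕ) : Even (orderOf (3 : ZMod (5 + 12 * k))) := by
  apply even_orderOf_of_not_isSquare
  have hJ : jacobiSym 3 (5 + 12 * k) = -1 := jacobiSym_three_of_mod_twelve_eq_five_s10 (by omega)
  simpa using ZMod.nonsquare_of_jacobiSym_eq_neg_one hJ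
end

section
/- Let s ≥ 2, t ≥ 1, and let r ≥ 2 be coprime to s. If r divides t·(s^(ord_r(s)) - 1)/(s-1), then r divides gcd(t, s-1)·(s^(ord_r(s)) - 1)/(s-1). -/
theorem stmt11 (s t r : ℕ) (hs : 2 ≤ s) (ht : 1 ≤ t) (hr : 2 ≤ r)
    (hcop : Nat.Coprime r s)
    (h : r ∣ t * ((s ^ orderOf (s : ZMod r) - 1) / (s - 1))) :
    r ∣ Nat.gcd t (s - 1) * ((s ^ orderOf (s : ZMod r) - 1) / (s - 1)) := by
  set k := orderOf (s : ZMod r) with hk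
  set Q := (s ^ k - 1) / (s - 1) with hQdef
  have hdvd : (s - 1) ∣ s ^ k - 1 := by
    simpa using Nat.sub_dvd_pow_sub_pow s 1 k
  have hQ : (s - 1) * Q = s ^ k - 1 := Nat.mul_div_cancel' hdvd
  have hpow : ((s : ZMod r)) ^ k = 1 := pow_orderOf_eq_one _
  have hmod : (s ^ k : ℕ) ≡ 1 [MOD r] := by
    have := (ZMod.natCast_eq_natCast_iff (s ^ k) 1 r).mp (by push_cast; simpa using hpow)
    exact this
  have hr1 : r ∣ s ^ k - 1 :=
    (Nat.modEq_iff_dvd' (Nat.one_le_pow _ _ (by omega))).mp hmod.symm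
  have h2 : r ∣ (s - 1) * Q := hQ ▸ hr1
  have := Nat.dvd_gcd h h2
  rwa [Nat.gcd_mul_right] at this
end

section
/- Let s ≥ 2, t ≥ 1, r ≥ 2 coprime to s, and set g = (s-1)/gcd(s-1,t). Then r is distinguished with respect to (s,t) (i.e., r divides t·(s^(ord_r(s)) - 1)/(s-1)) if and only if ord_r(s) = ord_{gr}(s). -/
theorem stmt12 (s t r g : ℕ) (hs : 2 ≤ s) (ht : 1 ≤ t) (hr : 2 ≤ r)
    (hcop : Nat.Coprime r s) (hg : g = (s - 1) / Nat.gcd (s - 1) t) :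
    r ∣ t * ((s ^ orderOf (s : ZMod r) - 1) / (s - 1)) ↔
      orderOf (s : ZMod r) = orderOf (s : ZMod (g * r)) := by
  set d := orderOf (s : ZMod r) with hd
  set e := Nat.gcd (s - 1) t with he
  set N := (s ^ d - 1) / (s - 1) with hN
  have hs1 : 1 ≤ s - 1 := by omega
  have hedvd : e ∣ s - 1 := Nat.gcd_dvd_left _ _
  have hge : g * e = s - 1 := by rw [hg]; exact Nat.div_mul_cancel hedvd
  have hgpos : 0 < g := by
    rcases Nat.eq_zero_or_pos g with h | h
    · rw [h, zero_mul] at hge; omega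
    · exact h
  have hdvdN : (s - 1) ∣ s ^ d - 1 := by
    simpa using Nat.sub_dvd_pow_sub_pow s 1 d
  have hNs : (s - 1) * N = s ^ d - 1 := Nat.mul_div_cancel' hdvdN
  have hsd1 : 1 ≤ s ^ d := Nat.one_le_pow _ _ (by omega)
  have key : ∀ m : ℕ, (m ∣ s ^ d - 1) ↔ ((s : ZMod m) ^ d = 1) := by
    intro m
    rw [← Nat.cast_pow, show ((1 : ZMod m)) = ((1 : ℕ) : ZMod m) by simp,
      ZMod.natCast_eq_natCast_iff]
    constructor
    · intro h
      exact ((Nat.modEq_iff_dvd' hsd1).2 h).symm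
    · intro h
      exact (Nat.modEq_iff_dvd' hsd1).1 h.symm
  -- r divides s^d - 1
  have hrsd : r ∣ s ^ d - 1 := (key r).2 (by rw [hd]; exact pow_orderOf_eq_one _)
  -- d divides ord_{gr}
  have hddvd : d ∣ orderOf (s : ZMod (g * r)) := by
    apply orderOf_dvd_iff_pow_eq_one.2
    have := pow_orderOf_eq_one (s : ZMod (g * r))
    have hmap := congrArg (ZMod.castHom (dvd_mul_left r g) (ZMod r)) this
    rw [map_pow, map_natCast, map_one] at hmap
    exact hmap
  constructor
  · intro hL
    -- r ∣ t * N and r ∣ (s-1) * N, so r ∣ e * N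
    have hreN : r ∣ e * N := by
      have h1 : r ∣ (s - 1) * N := hNs ▸ hrsd
      have := Nat.dvd_gcd h1 hL
      rwa [Nat.gcd_mul_right, ← he] at this
    have hgr : g * r ∣ s ^ d - 1 := by
      rw [← hNs, ← hge, mul_assoc]
      exact mul_dvd_mul_left g hreN
    have hordvd : orderOf (s : ZMod (g * r)) ∣ d :=
      orderOf_dvd_iff_pow_eq_one.2 ((key (g * r)).1 hgr)
    exact Nat.dvd_antisymm hddvd hordvd
  · intro hEq
    have hgr : g * r ∣ s ^ d - 1 := by
      apply (key (g * r)).2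
      rw [hEq]
      exact pow_orderOf_eq_one _
    have hreN : r ∣ e * N := by
      have : g * r ∣ g * (e * N) := by
        rw [← mul_assoc, hge, hNs]; exact hgr
      exact (mul_dvd_mul_iff_left (by omega : g ≠ 0)).1 this
    exact hreN.trans (mul_dvd_mul_right (Nat.gcd_dvd_right _ _) N)
end

section
/- Let s ≥ 2 and t, t' ≥ 1 with gcd(s-1,t) dividing gcd(s-1,t'). If r ≥ 2 coprime to s is distinguished with respect to (s,t), then r is distinguished with respect to (s,t'). -/
theorem stmt13 (s t t' r : ℕ) (hs : 2 ≤ s) (ht : 1 ≤ t) (ht' : 1 ≤ t')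
    (hr : 2 ≤ r) (hcop : Nat.Coprime r s)
    (hdvd : Nat.gcd (s - 1) t ∣ Nat.gcd (s - 1) t')
    (h : r ∣ t * ((s ^ orderOf (s : ZMod r) - 1) / (s - 1))) :
    r ∣ t' * ((s ^ orderOf (s : ZMod r) - 1) / (s - 1)) := by
  set d := orderOf (s : ZMod r) with hd
  set Q := (s ^ d - 1) / (s - 1) with hQ
  have hdvd1 : (s - 1) ∣ s ^ d - 1 := by
    simpa using Nat.sub_dvd_pow_sub_pow s 1 d
  have hQeq : (s - 1) * Q = s ^ d - 1 := Nat.mul_div_cancel' hdvd1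
  have hrd : r ∣ s ^ d - 1 := by
    have h1 : (s : ZMod r) ^ d = 1 := pow_orderOf_eq_one _
    have h2 : (s ^ d : ℕ) ≡ 1 [MOD r] := by
      have := (ZMod.natCast_eq_natCast_iff (s ^ d) 1 r).mp (by push_cast; simpa using h1)
      exact this
    exact (Nat.modEq_iff_dvd' (Nat.one_le_pow _ _ (by omega))).mp h2.symm
  set g := Nat.gcd r Q with hgdef
  set m := r / g with hmdef
  have hg : g ∣ Q := Nat.gcd_dvd_right _ _
  have hgr : g ∣ r := Nat.gcd_dvd_left _ _
  have hgpos : 0 < g := Nat.gcd_pos_of_pos_left Q (by omega)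
  have hcopr : Nat.Coprime m (Q / g) := Nat.coprime_div_gcd_div_gcd hgpos
  have hmg : m * g = r := Nat.div_mul_cancel hgr
  have hmt : m ∣ t := by
    have h3 : m * g ∣ t * (Q / g) * g := by
      rw [hmg, mul_assoc, Nat.div_mul_cancel hg]; exact h
    exact hcopr.dvd_of_dvd_mul_right ((Nat.mul_dvd_mul_iff_right hgpos).mp h3)
  have hms : m ∣ s - 1 := by
    have hrs : r ∣ (s - 1) * Q := hQeq ▸ hrd
    have h3 : m * g ∣ (s - 1) * (Q / g) * g := by
      rw [hmg, mul_assoc, Nat.div_mul_cancel hg]; exact hrs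
    exact hcopr.dvd_of_dvd_mul_right ((Nat.mul_dvd_mul_iff_right hgpos).mp h3)
  have hmt' : m ∣ t' := (Nat.dvd_gcd hms hmt).trans (hdvd.trans (Nat.gcd_dvd_right _ _))
  calc r = m * g := hmg.symm
    _ ∣ t' * Q := mul_dvd_mul hmt' hg
end

section
/- Let s ≥ 2, t ≥ 1, g = (s-1)/gcd(s-1,t), and let k ≥ 2 with gcd(k, g·s) = 1. Then k is distinguished with respect to (s,t), i.e., k divides t·(s^(ord_k(s)) - 1)/(s-1). -/
theorem stmt19 (s t g k : ℕ) (hs : 2 ≤ s) (ht : 1 ≤ t) (hk : 2 ≤ k)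
    (hg : g = (s - 1) / Nat.gcd (s - 1) t) (hcop : Nat.Coprime k (g * s)) :
    k ∣ t * ((s ^ orderOf (s : ZMod k) - 1) / (s - 1)) := by
  set d := orderOf (s : ZMod k) with hd
  set e := Nat.gcd (s - 1) t with he
  have hs1 : 1 ≤ s - 1 := by omega
  have hepos : 0 < e := Nat.gcd_pos_of_pos_left _ (by omega)
  have hedvd : e ∣ s - 1 := Nat.gcd_dvd_left _ _
  have hedvdt : e ∣ t := Nat.gcd_dvd_right _ _
  have hge : e * g = s - 1 := by
    rw [hg]; exact Nat.mul_div_cancel' hedvd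
  -- k ∣ s^d - 1
  have hkd : k ∣ s ^ d - 1 := by
    have h1 : ((s : ZMod k)) ^ d = 1 := pow_orderOf_eq_one _
    have h2 : ((s ^ d - 1 : ℕ) : ZMod k) = 0 := by
      have hle : 1 ≤ s ^ d := Nat.one_le_pow _ _ (by omega)
      push_cast [Nat.cast_sub hle]
      rw [h1]; ring
    exact (ZMod.natCast_eq_zero_iff _ _).mp h2
  have hgeo : (s - 1) ∣ s ^ d - 1 := by
    have := Nat.sub_dvd_pow_sub_pow s 1 d
    simpa using this
  set Q := (s ^ d - 1) / (s - 1) with hQ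
  have hQeq : s ^ d - 1 = (s - 1) * Q := (Nat.mul_div_cancel' hgeo).symm
  have hk' : k ∣ g * (e * Q) := by
    rw [show g * (e * Q) = (e * g) * Q by ring, hge, ← hQeq]; exact hkd
  have hcg : Nat.Coprime k g := Nat.Coprime.coprime_dvd_right (dvd_mul_right g s) hcop
  have hkeQ : k ∣ e * Q := (Nat.Coprime.dvd_of_dvd_mul_left hcg) hk'
  obtain ⟨t', ht'⟩ := hedvdt
  calc k ∣ e * Q := hkeQ
    _ ∣ t * Q := by rw [ht']; exact ⟨t', by ring⟩
end
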